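/- If w is a strictly balanced word of length 2k (k ≥ 3) over {a,b} and there exists a word u of length k with u ∉ ScatFact_k(w) and u is not of the form b^i a^{k-i} or a^i b^{k-i} for some 1 ≤ i ≤ k-1, then |ScatFact_k(w)| < 2^k − 1. -/

import Mathlib

/-!
If `ScatFact k w` had at least `2 ^ k - 1` elements, it would contain every word of length `k`
other than `u`, in particular every staircase `c ^ i d ^ (k - i)` with `0 < i < k`. These
staircases force every prefix of `w` to be balanced: a prefix with `m < k` letters `c` has at
most `m + 1` letters `d`. The greedy (leftmost) embedding of any word `v` of length at most `k`
therefore stays inside a prefix containing each letter at most `|v|` times, so it never runs out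
of letters. Hence `u` would be a scattered factor of `w` as well.
-/

def wa : Bool := false
def wb : Bool := true

/-- The set of scattered factors (subsequences) of `w` of length exactly `k`. -/
def ScatFact (k : ℕ) (w : List Bool) : Finset (List Bool) :=
  (w.sublists.filter (fun u => u.length = k)).toFinset

open List

lemma mem_scatFact {k : ℕ} {w u : List Bool} :
    u ∈ ScatFact k w ↔ u <+ w ∧ u.length = k := by
  simp [ScatFact]

theorem mem_of_pow_sub_one_le_card {α : Type*} [Fintype α] [DecidableEq α]
    {s : Finset (List α)} {k : ℕ} {u v : List α} (hs : ∀ x ∈ s, x.length = k)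
    (hu : u.length = k) (hus : u ∉ s) (hcard : Fintype.card α ^ k - 1 ≤ s.card)
    (hv : v.length = k) (hvu : v ≠ u) : v ∈ s := by
  by_contra hvs
  set T := insert u (insert v s)
  have hT : T.filter (·.length = k) = T :=
    Finset.filter_true_of_mem fun x hx => by
      simp only [T, Finset.mem_insert] at hx
      rcases hx with rfl | rfl | hx
      exacts [hu, hv, hs x hx]
  have hTcard := Finset.card_filter_length_eq_le (T := T) (s := k)
  rw [hT, Finset.card_insert_of_notMem (by simp [hvu.symm, hus]),
    Finset.card_insert_of_notMem hvs] at hTcard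
  omega

section Staircase

variable {α : Type*} [DecidableEq α]

def HasStaircases (k : ℕ) (w : List α) : Prop :=
  ∀ c d : α, c ≠ d → ∀ i, 0 < i → i < k → replicate i c ++ replicate (k - i) d <+ w

theorem count_add_le_of_replicate_append_sublist {c d : α} {i j : ℕ} {z w : List α}
    (h : replicate i c ++ replicate j d <+ w) (hz : z <+: w) (hzc : z.count c < i) :
    z.count d + j ≤ w.count d := by
  obtain ⟨p, q, rfl, hp, hq⟩ := append_sublist_iff.mp h
  have hzp : z <+: p := by
    rcases prefix_or_prefix_of_prefix hz (prefix_append p q) with hzp | hpz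
    · exact hzp
    · have hpc : i ≤ p.count c := by simpa using hp.count_le c
      have := hpz.count_le c
      omega
  have hqd : j ≤ q.count d := by simpa using hq.count_le d
  rw [count_append]
  exact Nat.add_le_add (hzp.count_le d) hqd

variable {k : ℕ} {w : List α} (hw : ∀ c, w.count c = k) (hst : HasStaircases k w)
include hw hst

theorem count_le_count_add_one_of_prefix {c d : α} {z : List α} (hz : z <+: w)
    (hzc : z.count c < k) (hcd : c ≠ d) : z.count d ≤ z.count c + 1 := by
  have hzd := hz.count_le d
  rw [hw d] at hzd
  by_cases hi : z.count c + 1 < k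
  · have := count_add_le_of_replicate_append_sublist
      (hst c d hcd _ (Nat.succ_pos _) hi) hz (Nat.lt_succ_self _)
    rw [hw d] at this
    omega
  · omega

theorem exists_prefix_append_singleton {x : List α} {n : ℕ} (hx : x <+: w)
    (hxn : ∀ d, x.count d ≤ n) (hn : n < k) (c : α) :
    ∃ y, x ++ y ++ [c] <+: w ∧ ∀ d, (x ++ y ++ [c]).count d ≤ n + 1 := by
  obtain ⟨r, rfl⟩ := hx
  have hcr : c ∈ r := by
    have := hw c
    rw [count_append] at this
    exact count_pos_iff.mp (by have := hxn c; omega)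
  obtain ⟨y, r', rfl, hcy⟩ := eq_append_cons_of_mem hcr
  refine ⟨y, ⟨r', by simp⟩, fun d => ?_⟩
  have hxyc : (x ++ y).count c = x.count c := by simp [count_eq_zero_of_not_mem hcy]
  by_cases hdc : d = c
  · subst hdc
    rw [count_append, hxyc, count_singleton_self]
    exact Nat.succ_le_succ (hxn d)
  · have := count_le_count_add_one_of_prefix hw hst (z := x ++ y) ⟨c :: r', by simp⟩
      (by have := hxn c; omega) (Ne.symm hdc)
    rw [count_append]
    simp only [count_singleton, beq_iff_eq, if_neg (Ne.symm hdc)]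
    have := hxn c
    omega

theorem sublist_of_length_le {v : List α} (hv : v.length ≤ k) : v <+ w := by
  suffices h : ∀ v : List α, v.length ≤ k →
      ∃ x, x <+: w ∧ v <+ x ∧ ∀ d, x.count d ≤ v.length by
    obtain ⟨x, hx, hvx, -⟩ := h v hv
    exact hvx.trans hx.sublist
  intro v
  induction v using reverseRecOn with
  | nil => exact fun _ => ⟨[], nil_prefix, nil_sublist _, by simp⟩
  | append_singleton v c ih =>
    intro hv
    rw [length_append, length_singleton] at hv
    obtain ⟨x, hx, hvx, hxn⟩ := ih (by omega)
    obtain ⟨y, hxy, hxyn⟩ := exists_prefix_append_singleton hw hst hx hxn (by omega) c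
    refine ⟨_, hxy, (hvx.trans (sublist_append_left x y)).append (Sublist.refl _), ?_⟩
    simpa using hxyn

end Staircase

theorem scatfact_card_lt_of_missing_general (k : ℕ) (w : List Bool)
    (ha : w.count wa = k) (hb : w.count wb = k)
    (u : List Bool) (hu : u.length = k) (hmem : u ∉ ScatFact k w)
    (hform : ∀ i : ℕ, 1 ≤ i → i ≤ k - 1 →
      u ≠ List.replicate i wb ++ List.replicate (k - i) wa ∧
      u ≠ List.replicate i wa ++ List.replicate (k - i) wb) :
    (ScatFact k w).card < 2 ^ k - 1 := by
  by_contra! hcard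
  have hall : ∀ v : List Bool, v.length = k → v ≠ u → v <+ w := fun v hv hvu =>
    (mem_scatFact.mp <| mem_of_pow_sub_one_le_card (fun x hx => (mem_scatFact.mp hx).2) hu hmem
      (by simpa using hcard) hv hvu).1
  have hw : ∀ c, w.count c = k := fun c => by cases c; exacts [ha, hb]
  have hst : HasStaircases k w := by
    intro c d hcd i hi hik
    refine hall _ (by simp only [length_append, length_replicate]; omega) ?_
    obtain ⟨hwb, hwa⟩ := hform i hi (by omega)
    cases c <;> cases d <;> first | exact absurd rfl hcd | exact hwa.symm | exact hwb.symm
  exact hmem (mem_scatFact.mpr ⟨sublist_of_length_le hw hst hu.le, hu⟩)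

theorem scatfact_card_lt_of_missing (k : ℕ) (hk : 3 ≤ k) (w : List Bool)
    (hlen : w.length = 2 * k) (ha : w.count wa = k) (hb : w.count wb = k)
    (u : List Bool) (hu : u.length = k) (hmem : u ∉ ScatFact k w)
    (hform : ∀ i : ℕ, 1 ≤ i → i ≤ k - 1 →
      u ≠ List.replicate i wb ++ List.replicate (k - i) wa ∧
      u ≠ List.replicate i wa ++ List.replicate (k - i) wb) :
    (ScatFact k w).card < 2 ^ k - 1 :=
  scatfact_card_lt_of_missing_general k w ha hb u hu hmem hform
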